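/- arXiv:2108.02905 — 5 statements merged into one kernel-verified Lean document; each statement's English description precedes it below -/
import Mathlib

section
/- Let ε₁ ∈ ℝ^{n₁} and ε₂ ∈ ℝ^{n₂} be independent mean-zero random vectors with covariances Σ₁ and Σ₂, and let A be an n₀×n₁ matrix and B an n₀×n₂ matrix. Then E⟨Aε₁, Bε₂⟩² ≤ λ_max(Σ₁) · λ_max(Σ₂) · λ_max(AAᵀ) · tr(BᵀB). -/
open MeasureTheory ProbabilityTheory Matrix

lemma rayleigh_aux {n : ℕ} {H : Matrix (Fin n) (Fin n) ℝ} (hH : H.IsHermitian)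
    (x : Fin n → ℝ) :
    x ⬝ᵥ H *ᵥ x ≤ (⨆ i, hH.eigenvalues i) * (x ⬝ᵥ x) := by
  set U : Matrix (Fin n) (Fin n) ℝ := (hH.eigenvectorUnitary : Matrix (Fin n) (Fin n) ℝ) with hU
  have hUmem : U ∈ Matrix.unitaryGroup (Fin n) ℝ := hH.eigenvectorUnitary.2
  have hUU : U * Uᵀ = 1 := by
    have := (Matrix.mem_unitaryGroup_iff).mp hUmem
    simpa [Matrix.star_eq_conjTranspose, Matrix.conjTranspose_eq_transpose_of_trivial] using this
  set y : Fin n → ℝ := x ᵥ* U with hy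
  have hkey : x ⬝ᵥ H *ᵥ x = ∑ i, hH.eigenvalues i * (y i * y i) := by
    conv_lhs => rw [hH.spectral_theorem, Unitary.conjStarAlgAut_apply]
    rw [← Matrix.mulVec_mulVec, ← Matrix.mulVec_mulVec, Matrix.dotProduct_mulVec]
    have hstar : (star U : Matrix (Fin n) (Fin n) ℝ) *ᵥ x = y := by
      have h1 : (star U : Matrix (Fin n) (Fin n) ℝ) = Uᵀ := by
        simp [Matrix.star_eq_conjTranspose, Matrix.conjTranspose_eq_transpose_of_trivial]
      rw [h1, Matrix.mulVec_transpose, hy]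
    rw [hstar]
    simp only [dotProduct, Matrix.mulVec_diagonal, Function.comp_apply]
    refine Finset.sum_congr rfl fun i _ => ?_
    simp only [RCLike.ofReal]
    ring_nf
    simp
    rw [← hU, ← hy]
    ring
  have hyy : y ⬝ᵥ y = x ⬝ᵥ x := by
    have h2 : y = Uᵀ *ᵥ x := by rw [Matrix.mulVec_transpose, hy]
    calc y ⬝ᵥ y = y ⬝ᵥ (Uᵀ *ᵥ x) := by rw [← h2]
      _ = (y ᵥ* Uᵀ) ⬝ᵥ x := by rw [Matrix.dotProduct_mulVec]
      _ = (x ᵥ* (U * Uᵀ)) ⬝ᵥ x := by rw [hy, Matrix.vecMul_vecMul]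
      _ = x ⬝ᵥ x := by rw [hUU, Matrix.vecMul_one]
  rw [hkey, ← hyy]
  have hbdd : BddAbove (Set.range hH.eigenvalues) := (Set.finite_range _).bddAbove
  calc ∑ i, hH.eigenvalues i * (y i * y i)
      ≤ ∑ i, (⨆ j, hH.eigenvalues j) * (y i * y i) := by
        refine Finset.sum_le_sum fun i _ => ?_
        exact mul_le_mul_of_nonneg_right (le_ciSup hbdd i) (mul_self_nonneg _)
    _ = (⨆ j, hH.eigenvalues j) * (y ⬝ᵥ y) := by
        rw [dotProduct, Finset.mul_sum]

lemma psd_of_cov {Ω : Type*} [MeasurableSpace Ω] {μ : Measure Ω}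
    {n : ℕ} (ε : Ω → Fin n → ℝ) (S : Matrix (Fin n) (Fin n) ℝ)
    (hcov : ∀ i j, ∫ ω, ε ω i * ε ω j ∂μ = S i j)
    (hint : ∀ i j, Integrable (fun ω => ε ω i * ε ω j) μ) : S.PosSemidef := by
  rw [Matrix.posSemidef_iff_dotProduct_mulVec]
  constructor
  · ext i j
    rw [Matrix.conjTranspose_apply, star_trivial, ← hcov i j, ← hcov j i]
    congr 1
    funext ω
    ring
  · intro x
    rw [star_trivial]
    have hxq : x ⬝ᵥ S *ᵥ x = ∫ ω, (∑ i, x i * ε ω i)^2 ∂μ := by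
      have h1 : ∀ ω, (∑ i, x i * ε ω i)^2 = ∑ i, ∑ j, x i * x j * (ε ω i * ε ω j) := by
        intro ω
        rw [sq, Finset.sum_mul_sum]
        exact Finset.sum_congr rfl fun i _ => Finset.sum_congr rfl fun j _ => by ring
      simp_rw [h1]
      rw [integral_finset_sum _
        (fun i _ => integrable_finset_sum _ (fun j _ => (hint i j).const_mul _))]
      have h2 : ∀ i : Fin n, ∫ ω, ∑ j, x i * x j * (ε ω i * ε ω j) ∂μ
          = ∑ j, x i * x j * S i j := by
        intro i
        rw [integral_finset_sum _ (fun j _ => (hint i j).const_mul _)]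
        exact Finset.sum_congr rfl fun j _ => by rw [MeasureTheory.integral_const_mul, hcov]
      simp_rw [h2]
      simp only [dotProduct, Matrix.mulVec, Finset.mul_sum]
      exact Finset.sum_congr rfl fun i _ => Finset.sum_congr rfl fun j _ => by ring
    rw [hxq]
    exact integral_nonneg fun ω => sq_nonneg _

lemma sup_eig_nonneg {n : ℕ} {S : Matrix (Fin n) (Fin n) ℝ} (h : S.PosSemidef)
    (hH : S.IsHermitian) : 0 ≤ ⨆ i, hH.eigenvalues i := by
  cases n with
  | zero => simp [Real.iSup_of_isEmpty]
  | succ m =>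
    exact (h.eigenvalues_nonneg 0).trans (le_ciSup (Set.finite_range _).bddAbove 0)

lemma cov_mulVec {Ω : Type*} [MeasurableSpace Ω] {μ : Measure Ω} {n m : ℕ}
    (ε : Ω → Fin m → ℝ) (C : Matrix (Fin n) (Fin m) ℝ) (S : Matrix (Fin m) (Fin m) ℝ)
    (hcov : ∀ i j, ∫ ω, ε ω i * ε ω j ∂μ = S i j)
    (hint : ∀ i j, Integrable (fun ω => ε ω i * ε ω j) μ) (i j : Fin n) :
    Integrable (fun ω => C.mulVec (ε ω) i * C.mulVec (ε ω) j) μ ∧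
    ∫ ω, C.mulVec (ε ω) i * C.mulVec (ε ω) j ∂μ = (C * S * Cᵀ) i j := by
  have hexp : (fun ω => C.mulVec (ε ω) i * C.mulVec (ε ω) j)
      = fun ω => ∑ k, ∑ l, (C i k * C j l) * (ε ω k * ε ω l) := by
    funext ω
    simp only [Matrix.mulVec, dotProduct]
    rw [Finset.sum_mul_sum]
    exact Finset.sum_congr rfl fun k _ => Finset.sum_congr rfl fun l _ => by ring
  have hintg : Integrable (fun ω => ∑ k, ∑ l, (C i k * C j l) * (ε ω k * ε ω l)) μ :=
    integrable_finset_sum _ fun k _ => integrable_finset_sum _ fun l _ =>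
      (hint k l).const_mul _
  refine ⟨hexp ▸ hintg, ?_⟩
  rw [hexp, integral_finset_sum _ (fun k _ => integrable_finset_sum _
    (fun l _ => (hint k l).const_mul _))]
  have h2 : ∀ k, ∫ ω, ∑ l, (C i k * C j l) * (ε ω k * ε ω l) ∂μ
      = ∑ l, (C i k * C j l) * S k l := by
    intro k
    rw [integral_finset_sum _ (fun l _ => (hint k l).const_mul _)]
    exact Finset.sum_congr rfl fun l _ => by rw [MeasureTheory.integral_const_mul, hcov]
  simp_rw [h2]
  simp only [Matrix.mul_apply, Matrix.transpose_apply, Finset.sum_mul]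
  rw [Finset.sum_comm]
  exact Finset.sum_congr rfl fun k _ => Finset.sum_congr rfl fun l _ => by ring

/-- For independent mean-zero random vectors `ε₁ ∈ ℝ^{n₁}`, `ε₂ ∈ ℝ^{n₂}`
with covariances `S₁, S₂`, and fixed matrices `A : n₀×n₁`, `B : n₀×n₂`,
`E⟨Aε₁, Bε₂⟩² ≤ λ_max(S₁)·λ_max(S₂)·λ_max(AAᵀ)·tr(BᵀB)`. -/
theorem stmt3 (n₀ n₁ n₂ : ℕ) (Ω : Type*) [MeasurableSpace Ω] (μ : Measure Ω)
    [IsProbabilityMeasure μ]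
    (ε₁ : Ω → Fin n₁ → ℝ) (ε₂ : Ω → Fin n₂ → ℝ)
    (A : Matrix (Fin n₀) (Fin n₁) ℝ) (B : Matrix (Fin n₀) (Fin n₂) ℝ)
    (S₁ : Matrix (Fin n₁) (Fin n₁) ℝ) (S₂ : Matrix (Fin n₂) (Fin n₂) ℝ)
    (hmeas₁ : Measurable ε₁) (hmeas₂ : Measurable ε₂)
    (hindep : IndepFun ε₁ ε₂ μ)
    (hmean₁ : ∀ i, ∫ ω, ε₁ ω i ∂μ = 0) (hmean₂ : ∀ i, ∫ ω, ε₂ ω i ∂μ = 0)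
    (hcov₁ : ∀ i j, ∫ ω, ε₁ ω i * ε₁ ω j ∂μ = S₁ i j)
    (hcov₂ : ∀ i j, ∫ ω, ε₂ ω i * ε₂ ω j ∂μ = S₂ i j)
    (hint₁ : ∀ i j, Integrable (fun ω => ε₁ ω i * ε₁ ω j) μ)
    (hint₂ : ∀ i j, Integrable (fun ω => ε₂ ω i * ε₂ ω j) μ)
    (hintc : Integrable (fun ω => (∑ i, A.mulVec (ε₁ ω) i * B.mulVec (ε₂ ω) i) ^ 2) μ)
    (hS₁ : S₁.IsHermitian) (hS₂ : S₂.IsHermitian) (hAA : (A * Aᵀ).IsHermitian) :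
    (∫ ω, (∑ i, A.mulVec (ε₁ ω) i * B.mulVec (ε₂ ω) i) ^ 2 ∂μ) ≤
      (⨆ i, hS₁.eigenvalues i) * (⨆ i, hS₂.eigenvalues i) *
        (⨆ i, hAA.eigenvalues i) * (Bᵀ * B).trace := by
  set M : Matrix (Fin n₀) (Fin n₀) ℝ := A * S₁ * Aᵀ with hMdef
  set N : Matrix (Fin n₀) (Fin n₀) ℝ := B * S₂ * Bᵀ with hNdef
  set l1 : ℝ := ⨆ i, hS₁.eigenvalues i with hl1
  set l2 : ℝ := ⨆ i, hS₂.eigenvalues i with hl2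
  set lA : ℝ := ⨆ i, hAA.eigenvalues i with hlA
  -- measurability of coordinates of mulVec
  have hmA : ∀ i : Fin n₀, Measurable (fun v : Fin n₁ → ℝ => A.mulVec v i) := by
    intro i
    simp only [Matrix.mulVec, dotProduct]
    exact Finset.measurable_sum _ fun k _ => (measurable_pi_apply k).const_mul _
  have hmB : ∀ i : Fin n₀, Measurable (fun v : Fin n₂ → ℝ => B.mulVec v i) := by
    intro i
    simp only [Matrix.mulVec, dotProduct]
    exact Finset.measurable_sum _ fun k _ => (measurable_pi_apply k).const_mul _
  have hX := fun i j => cov_mulVec ε₁ A S₁ hcov₁ hint₁ i j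
  have hY := fun i j => cov_mulVec ε₂ B S₂ hcov₂ hint₂ i j
  have hind : ∀ i j : Fin n₀,
      IndepFun (fun ω => A.mulVec (ε₁ ω) i * A.mulVec (ε₁ ω) j)
        (fun ω => B.mulVec (ε₂ ω) i * B.mulVec (ε₂ ω) j) μ :=
    fun i j => hindep.comp ((hmA i).mul (hmA j)) ((hmB i).mul (hmB j))
  -- key identity
  have hkey : (∫ ω, (∑ i, A.mulVec (ε₁ ω) i * B.mulVec (ε₂ ω) i) ^ 2 ∂μ)
      = ∑ i, ∑ j, M i j * N i j := by
    have hpt : ∀ ω, (∑ i, A.mulVec (ε₁ ω) i * B.mulVec (ε₂ ω) i) ^ 2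
        = ∑ i, ∑ j, (A.mulVec (ε₁ ω) i * A.mulVec (ε₁ ω) j)
            * (B.mulVec (ε₂ ω) i * B.mulVec (ε₂ ω) j) := by
      intro ω
      rw [sq, Finset.sum_mul_sum]
      exact Finset.sum_congr rfl fun i _ => Finset.sum_congr rfl fun j _ => by ring
    have hprodint : ∀ i j : Fin n₀,
        Integrable (fun ω => (A.mulVec (ε₁ ω) i * A.mulVec (ε₁ ω) j)
          * (B.mulVec (ε₂ ω) i * B.mulVec (ε₂ ω) j)) μ :=
      fun i j => (hind i j).integrable_mul (hX i j).1 (hY i j).1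
    simp_rw [hpt]
    rw [integral_finset_sum _ (fun i _ => integrable_finset_sum _ (fun j _ => hprodint i j))]
    refine Finset.sum_congr rfl fun i _ => ?_
    rw [integral_finset_sum _ (fun j _ => hprodint i j)]
    refine Finset.sum_congr rfl fun j _ => ?_
    have := (hind i j).integral_fun_mul_eq_mul_integral (hX i j).1.aestronglyMeasurable
      (hY i j).1.aestronglyMeasurable
    calc ∫ ω, (A.mulVec (ε₁ ω) i * A.mulVec (ε₁ ω) j)
          * (B.mulVec (ε₂ ω) i * B.mulVec (ε₂ ω) j) ∂μ
        = (∫ ω, A.mulVec (ε₁ ω) i * A.mulVec (ε₁ ω) j ∂μ)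
          * ∫ ω, B.mulVec (ε₂ ω) i * B.mulVec (ε₂ ω) j ∂μ := this
      _ = M i j * N i j := by rw [(hX i j).2, (hY i j).2]
  rw [hkey]
  -- PSD facts
  have psd₁ : S₁.PosSemidef := psd_of_cov ε₁ S₁ hcov₁ hint₁
  have psd₂ : S₂.PosSemidef := psd_of_cov ε₂ S₂ hcov₂ hint₂
  have psdAA : (A * Aᵀ).PosSemidef := by
    have := Matrix.posSemidef_self_mul_conjTranspose A
    simpa [Matrix.conjTranspose_eq_transpose_of_trivial] using this
  have hl1 : 0 ≤ l1 := sup_eig_nonneg psd₁ hS₁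
  have hlA : 0 ≤ lA := sup_eig_nonneg psdAA hAA
  -- square root of S₂
  set R : Matrix (Fin n₂) (Fin n₂) ℝ := (open scoped MatrixOrder in CFC.sqrt S₂) with hRdef
  have hRsym : Rᵀ = R := by
    rw [← Matrix.conjTranspose_eq_transpose_of_trivial]
    open scoped MatrixOrder in exact (CFC.sqrt_nonneg S₂).posSemidef.1
  have hRR : R * R = S₂ := by open scoped MatrixOrder in exact CFC.sqrt_mul_sqrt_self S₂ psd₂.nonneg
  set C : Matrix (Fin n₀) (Fin n₂) ℝ := B * R with hCdef
  have hN : N = C * Cᵀ := by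
    rw [hNdef, hCdef, Matrix.transpose_mul, hRsym, ← hRR]
    simp [Matrix.mul_assoc]
  set c : Fin n₂ → (Fin n₀ → ℝ) := fun k i => C i k with hc
  have hT : ∑ i, ∑ j, M i j * N i j = ∑ k, (c k) ⬝ᵥ M *ᵥ (c k) := by
    have hterm : ∀ i j : Fin n₀, M i j * N i j = ∑ k, C i k * (M i j * C j k) := by
      intro i j
      have hNij : N i j = ∑ k, C i k * C j k := by
        rw [hN]
        simp [Matrix.mul_apply]
      rw [hNij, Finset.mul_sum]
      exact Finset.sum_congr rfl fun k _ => by ring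
    have hrhs : ∀ k, (c k) ⬝ᵥ M *ᵥ (c k) = ∑ i, ∑ j, C i k * (M i j * C j k) := by
      intro k
      simp only [dotProduct, Matrix.mulVec, Finset.mul_sum, hc]
    simp_rw [hterm, hrhs]
    calc ∑ i, ∑ j, ∑ k, C i k * (M i j * C j k)
        = ∑ i, ∑ k, ∑ j, C i k * (M i j * C j k) :=
          Finset.sum_congr rfl fun i _ => Finset.sum_comm
      _ = ∑ k, ∑ i, ∑ j, C i k * (M i j * C j k) := Finset.sum_comm
  have hk : ∀ k, (c k) ⬝ᵥ M *ᵥ (c k) ≤ l1 * lA * ((c k) ⬝ᵥ (c k)) := by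
    intro k
    have e1 : (c k) ⬝ᵥ M *ᵥ (c k) = (Aᵀ *ᵥ c k) ⬝ᵥ S₁ *ᵥ (Aᵀ *ᵥ c k) := by
      rw [hMdef, ← Matrix.mulVec_mulVec, ← Matrix.mulVec_mulVec,
        Matrix.dotProduct_mulVec, ← Matrix.mulVec_transpose]
    have e3 : (Aᵀ *ᵥ c k) ⬝ᵥ (Aᵀ *ᵥ c k) = (c k) ⬝ᵥ (A * Aᵀ) *ᵥ (c k) := by
      rw [Matrix.dotProduct_mulVec, Matrix.vecMul_transpose, Matrix.mulVec_mulVec,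
        dotProduct_comm]
    calc (c k) ⬝ᵥ M *ᵥ (c k)
        ≤ l1 * ((Aᵀ *ᵥ c k) ⬝ᵥ (Aᵀ *ᵥ c k)) := by rw [e1]; exact rayleigh_aux hS₁ _
      _ = l1 * ((c k) ⬝ᵥ (A * Aᵀ) *ᵥ (c k)) := by rw [e3]
      _ ≤ l1 * (lA * ((c k) ⬝ᵥ (c k))) :=
          mul_le_mul_of_nonneg_left (rayleigh_aux hAA _) hl1
      _ = l1 * lA * ((c k) ⬝ᵥ (c k)) := by ring
  have hsum : ∑ k, (c k) ⬝ᵥ (c k) ≤ l2 * (Bᵀ * B).trace := by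
    set b : Fin n₀ → (Fin n₂ → ℝ) := fun i t => B i t with hb
    have h1 : ∑ k, (c k) ⬝ᵥ (c k) = ∑ i, (b i) ⬝ᵥ S₂ *ᵥ (b i) := by
      have hL : ∑ k, (c k) ⬝ᵥ (c k) = (C * Cᵀ).trace := by
        simp only [Matrix.trace, Matrix.diag, Matrix.mul_apply, Matrix.transpose_apply,
          dotProduct, hc]
        rw [Finset.sum_comm]
      have hRt : ∑ i, (b i) ⬝ᵥ S₂ *ᵥ (b i) = (B * S₂ * Bᵀ).trace := by
        simp only [Matrix.trace, Matrix.diag, Matrix.mul_apply, Matrix.transpose_apply,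
          dotProduct, Matrix.mulVec, Finset.mul_sum, Finset.sum_mul, hb]
        refine Finset.sum_congr rfl fun i _ => ?_
        rw [Finset.sum_comm]
        exact Finset.sum_congr rfl fun t _ => Finset.sum_congr rfl fun s _ => by ring
      rw [hL, hRt, ← hN, hNdef]
    have h3 : ∑ i, (b i) ⬝ᵥ (b i) = (Bᵀ * B).trace := by
      simp only [Matrix.trace, Matrix.diag, Matrix.mul_apply, Matrix.transpose_apply,
        dotProduct, hb]
      rw [Finset.sum_comm]
    calc ∑ k, (c k) ⬝ᵥ (c k) = ∑ i, (b i) ⬝ᵥ S₂ *ᵥ (b i) := h1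
      _ ≤ ∑ i, l2 * ((b i) ⬝ᵥ (b i)) :=
          Finset.sum_le_sum fun i _ => rayleigh_aux hS₂ _
      _ = l2 * ∑ i, (b i) ⬝ᵥ (b i) := by rw [Finset.mul_sum]
      _ = l2 * (Bᵀ * B).trace := by rw [h3]
  calc ∑ i, ∑ j, M i j * N i j = ∑ k, (c k) ⬝ᵥ M *ᵥ (c k) := hT
    _ ≤ ∑ k, l1 * lA * ((c k) ⬝ᵥ (c k)) := Finset.sum_le_sum fun k _ => hk k
    _ = l1 * lA * ∑ k, (c k) ⬝ᵥ (c k) := by rw [Finset.mul_sum]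
    _ ≤ l1 * lA * (l2 * (Bᵀ * B).trace) :=
        mul_le_mul_of_nonneg_left hsum (mul_nonneg hl1 hlA)
    _ = l1 * l2 * lA * (Bᵀ * B).trace := by ring
end

section
/- Consider the quadratic risk function R(w₀,w₁,w₂) = (1-w₀-w₁)² a₁ + (1-w₀-w₂)² a₂ + w₀² v₀ + w₁² v₁ + w₂² v₂ with all a₁, a₂, v₀, v₁, v₂ > 0. If v₁ and v₂ tend to 0 while a₁, a₂, v₀ remain bounded below by positive constants, then the minimizer over the box [0,1]³ converges to (0,1,1), and the minimum risk converges to 0. -/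
open Filter Topology

private lemma stmt5_aux (r f : ℕ → ℝ) (c : ℝ) (hc : 0 < c)
    (hr : Tendsto r atTop (𝓝 0)) (h : ∀ k, (f k) ^ 2 * c ≤ r k) :
    Tendsto f atTop (𝓝 0) := by
  rw [tendsto_zero_iff_abs_tendsto_zero]
  have h1 : ∀ k, |f k| ≤ Real.sqrt (r k / c) := by
    intro k
    have h2 : (f k) ^ 2 ≤ r k / c := (le_div_iff₀ hc).2 (h k)
    calc |f k| = Real.sqrt ((f k) ^ 2) := (Real.sqrt_sq_eq_abs _).symm
    _ ≤ _ := Real.sqrt_le_sqrt h2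
  have h2 : Tendsto (fun k => Real.sqrt (r k / c)) atTop (𝓝 0) := by
    have h3 := hr.div_const c
    rw [zero_div] at h3
    exact (Real.continuous_sqrt.tendsto' 0 0 Real.sqrt_zero).comp h3
  exact squeeze_zero (fun k => abs_nonneg _) h1 h2

/-- For the quadratic risk
`R(w₀,w₁,w₂) = (1-w₀-w₁)²a₁ + (1-w₀-w₂)²a₂ + w₀²v₀ + w₁²v₁ + w₂²v₂` with all
coefficients positive, if `v₁, v₂ → 0` while `a₁, a₂, v₀` stay bounded below by a
positive constant, then any sequence of minimizers over `[0,1]³` converges to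
`(0,1,1)` and the minimum risk converges to `0`. -/
theorem stmt5 (a₁ a₂ v₀ v₁ v₂ : ℕ → ℝ)
    (hpos : ∀ k, 0 < a₁ k ∧ 0 < a₂ k ∧ 0 < v₀ k ∧ 0 < v₁ k ∧ 0 < v₂ k)
    (c : ℝ) (hc : 0 < c)
    (hlb : ∀ k, c ≤ a₁ k ∧ c ≤ a₂ k ∧ c ≤ v₀ k)
    (hv₁ : Tendsto v₁ atTop (𝓝 0)) (hv₂ : Tendsto v₂ atTop (𝓝 0))
    (R : ℕ → ℝ × ℝ × ℝ → ℝ)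
    (hR : ∀ k w, R k w = (1 - w.1 - w.2.1) ^ 2 * a₁ k + (1 - w.1 - w.2.2) ^ 2 * a₂ k
      + w.1 ^ 2 * v₀ k + w.2.1 ^ 2 * v₁ k + w.2.2 ^ 2 * v₂ k)
    (Q : Set (ℝ × ℝ × ℝ))
    (hQ : Q = {u | u.1 ∈ Set.Icc (0:ℝ) 1 ∧ u.2.1 ∈ Set.Icc (0:ℝ) 1 ∧ u.2.2 ∈ Set.Icc (0:ℝ) 1})
    (w : ℕ → ℝ × ℝ × ℝ) (hwQ : ∀ k, w k ∈ Q)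
    (hwmin : ∀ k, ∀ u ∈ Q, R k (w k) ≤ R k u) :
    Tendsto w atTop (𝓝 (0, 1, 1)) ∧ Tendsto (fun k => R k (w k)) atTop (𝓝 0) := by
  set r : ℕ → ℝ := fun k => R k (w k) with hrdef
  have hterm : ∀ k,
      (1 - (w k).1 - (w k).2.1) ^ 2 * a₁ k ≤ r k ∧
      (1 - (w k).1 - (w k).2.2) ^ 2 * a₂ k ≤ r k ∧
      (w k).1 ^ 2 * v₀ k ≤ r k ∧ 0 ≤ r k := by
    intro k
    obtain ⟨h1, h2, h3, h4, h5⟩ := hpos k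
    have e := hR k (w k)
    have n1 : 0 ≤ (1 - (w k).1 - (w k).2.1) ^ 2 * a₁ k := by positivity
    have n2 : 0 ≤ (1 - (w k).1 - (w k).2.2) ^ 2 * a₂ k := by positivity
    have n3 : 0 ≤ (w k).1 ^ 2 * v₀ k := by positivity
    have n4 : 0 ≤ (w k).2.1 ^ 2 * v₁ k := by positivity
    have n5 : 0 ≤ (w k).2.2 ^ 2 * v₂ k := by positivity
    refine ⟨?_, ?_, ?_, ?_⟩ <;> simp only [hrdef, e] <;> nlinarith
  have hub : ∀ k, r k ≤ v₁ k + v₂ k := by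
    intro k
    have hmem : ((0:ℝ), (1:ℝ), (1:ℝ)) ∈ Q := by
      rw [hQ]; simp [Set.mem_Icc]
    have := hwmin k _ hmem
    rw [hR k ((0:ℝ), (1:ℝ), (1:ℝ))] at this
    simpa using this
  have hr0 : Tendsto r atTop (𝓝 0) := by
    have hsum : Tendsto (fun k => v₁ k + v₂ k) atTop (𝓝 0) := by
      simpa using hv₁.add hv₂
    exact squeeze_zero (fun k => (hterm k).2.2.2) hub hsum
  have hc' : ∀ k, (w k).1 ^ 2 * c ≤ r k := fun k => le_trans
    (mul_le_mul_of_nonneg_left (hlb k).2.2 (by positivity)) (hterm k).2.2.1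
  have h0 : Tendsto (fun k => (w k).1) atTop (𝓝 0) := stmt5_aux r _ c hc hr0 hc'
  have hs1 : Tendsto (fun k => 1 - (w k).1 - (w k).2.1) atTop (𝓝 0) :=
    stmt5_aux r _ c hc hr0 (fun k => le_trans
      (mul_le_mul_of_nonneg_left (hlb k).1 (by positivity)) (hterm k).1)
  have hs2 : Tendsto (fun k => 1 - (w k).1 - (w k).2.2) atTop (𝓝 0) :=
    stmt5_aux r _ c hc hr0 (fun k => le_trans
      (mul_le_mul_of_nonneg_left (hlb k).2.1 (by positivity)) (hterm k).2.1)
  have h1 : Tendsto (fun k => (w k).2.1) atTop (𝓝 1) := by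
    have := (tendsto_const_nhds (x := (1:ℝ)) (f := atTop)).sub h0 |>.sub hs1
    simpa using this
  have h2 : Tendsto (fun k => (w k).2.2) atTop (𝓝 1) := by
    have := (tendsto_const_nhds (x := (1:ℝ)) (f := atTop)).sub h0 |>.sub hs2
    simpa using this
  exact ⟨h0.prodMk_nhds (h1.prodMk_nhds h2), hr0⟩
end

section
/- Let L_n, R_n, L̃_n : Q → (0,∞) be random functions on a set Q and ŵ ∈ Q a random element minimizing C_n(w) = ‖ε‖² + L_n(w)·( L̃_n(w)/L_n(w) + 2⟨ε, d(w)⟩/L_n(w) ) over Q. If sup_{w∈Q} |L̃_n(w)/L_n(w) - 1| →ᵖ 0, sup_{w∈Q} |⟨ε, d(w)⟩|/R_n(w) →ᵖ 0, and sup_{w∈Q} |L_n(w)/R_n(w) - 1| →ᵖ 0, then L_n(ŵ)/inf_{w∈Q} L_n(w) →ᵖ 1. -/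
open MeasureTheory Filter Topology

set_option maxHeartbeats 1000000 in
/-- Abstract asymptotic optimality of criterion minimization
(the three-step argument of Theorem 1). The criterion is
`C_n(w) = ‖ε‖² + L̃_n(w) + 2⟨ε,d(w)⟩` (here `c n ω` is the noise term `‖ε‖²` and
`D n ω w = ⟨ε, d(w)⟩`). If the three uniform convergences in probability hold,
then `L_n(ŵ)/inf_{w∈Q} L_n(w) → 1` in probability. -/
theorem stmt11 {Ω W : Type*} [MeasurableSpace Ω] (μ : Measure Ω) [IsProbabilityMeasure μ]
    (Q : Set W) (hQ : Q.Nonempty)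
    (L Lt D : ℕ → Ω → W → ℝ) (Rn : ℕ → W → ℝ) (c : ℕ → Ω → ℝ)
    (hLpos : ∀ n ω w, w ∈ Q → 0 < L n ω w)
    (hLtpos : ∀ n ω w, w ∈ Q → 0 < Lt n ω w)
    (hRpos : ∀ n w, w ∈ Q → 0 < Rn n w)
    (what wstar : ℕ → Ω → W)
    (hwhatQ : ∀ n ω, what n ω ∈ Q)
    (hwhatmin : ∀ n ω, ∀ w ∈ Q,
      c n ω + Lt n ω (what n ω) + 2 * D n ω (what n ω) ≤ c n ω + Lt n ω w + 2 * D n ω w)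
    (hwstarQ : ∀ n ω, wstar n ω ∈ Q)
    (hwstarmin : ∀ n ω, ∀ w ∈ Q, L n ω (wstar n ω) ≤ L n ω w)
    (h1 : ∀ δ > (0:ℝ),
      Tendsto (fun n => μ {ω | ∃ w ∈ Q, δ < |Lt n ω w / L n ω w - 1|}) atTop (𝓝 0))
    (h2 : ∀ δ > (0:ℝ),
      Tendsto (fun n => μ {ω | ∃ w ∈ Q, δ < |D n ω w| / Rn n w}) atTop (𝓝 0))
    (h3 : ∀ δ > (0:ℝ),
      Tendsto (fun n => μ {ω | ∃ w ∈ Q, δ < |L n ω w / Rn n w - 1|}) atTop (𝓝 0)) :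
    ∀ δ > (0:ℝ),
      Tendsto (fun n => μ {ω | δ < |L n ω (what n ω) / L n ω (wstar n ω) - 1|})
        atTop (𝓝 0) := by
  intro δ hδ
  set ε : ℝ := min (δ/10) (1/10) with hεdef
  have hεpos : 0 < ε := lt_min (by linarith) (by norm_num)
  have hε10 : ε ≤ 1/10 := min_le_right _ _
  have hεδ : 10 * ε ≤ δ := by
    have := min_le_left (δ/10) (1/10); linarith
  have key : ∀ n, {ω | δ < |L n ω (what n ω) / L n ω (wstar n ω) - 1|} ⊆
      ({ω | ∃ w ∈ Q, ε < |Lt n ω w / L n ω w - 1|} ∪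
       {ω | ∃ w ∈ Q, ε < |D n ω w| / Rn n w}) ∪
      {ω | ∃ w ∈ Q, ε < |L n ω w / Rn n w - 1|} := by
    intro n ω hω
    by_contra hcon
    simp only [Set.mem_union, Set.mem_setOf_eq, not_or] at hcon
    push_neg at hcon
    obtain ⟨⟨hc1, hc2⟩, hc3⟩ := hcon
    simp only [Set.mem_setOf_eq] at hω
    set a := what n ω
    set b := wstar n ω
    have haQ : a ∈ Q := hwhatQ n ω
    have hbQ : b ∈ Q := hwstarQ n ω
    have hA : 0 < L n ω a := hLpos n ω a haQ
    have hB : 0 < L n ω b := hLpos n ω b hbQ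
    have hRa : 0 < Rn n a := hRpos n a haQ
    have hRb : 0 < Rn n b := hRpos n b hbQ
    have hBA : L n ω b ≤ L n ω a := hwstarmin n ω a haQ
    -- bound Lt a from below
    have e1 := abs_le.mp (hc1 a haQ)
    have hLta : (1 - ε) * L n ω a ≤ Lt n ω a := by
      rw [div_sub' (ne_of_gt hA), le_div_iff₀ hA] at e1
      · nlinarith [e1.1]
    -- bound Lt b from above
    have e2 := abs_le.mp (hc1 b hbQ)
    have hLtb : Lt n ω b ≤ (1 + ε) * L n ω b := by
      rw [div_sub' (ne_of_gt hB), div_le_iff₀ hB] at e2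
      nlinarith [e2.2]
    -- Rn bounds from hc3
    have e3a := abs_le.mp (hc3 a haQ)
    have hRaA : (1 - ε) * Rn n a ≤ L n ω a := by
      rw [div_sub' (ne_of_gt hRa), le_div_iff₀ hRa] at e3a
      nlinarith [e3a.1]
    have e3b := abs_le.mp (hc3 b hbQ)
    have hRbB : (1 - ε) * Rn n b ≤ L n ω b := by
      rw [div_sub' (ne_of_gt hRb), le_div_iff₀ hRb] at e3b
      nlinarith [e3b.1]
    -- D bounds from hc2
    have hDa : |D n ω a| ≤ ε * Rn n a := by
      have := hc2 a haQ; rw [div_le_iff₀ hRa] at this; linarith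
    have hDb : |D n ω b| ≤ ε * Rn n b := by
      have := hc2 b hbQ; rw [div_le_iff₀ hRb] at this; linarith
    have hDa' : -(ε * Rn n a) ≤ D n ω a := neg_le_of_abs_le hDa
    have hDb' : D n ω b ≤ ε * Rn n b := le_of_abs_le hDb
    -- Rn a ≤ (10/9) * L a etc.
    have hRa' : Rn n a ≤ (10/9) * L n ω a := by nlinarith
    have hRb' : Rn n b ≤ (10/9) * L n ω b := by nlinarith
    -- criterion minimization
    have hmin := hwhatmin n ω b hbQ
    have hDa2 : -((10/9) * ε * L n ω a) ≤ D n ω a := by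
      have h := mul_le_mul_of_nonneg_left hRa' hεpos.le
      linarith
    have hDb2 : D n ω b ≤ (10/9) * ε * L n ω b := by
      have h := mul_le_mul_of_nonneg_left hRb' hεpos.le
      linarith
    have hchain : L n ω a - (29/9) * ε * L n ω a ≤ L n ω b + (29/9) * ε * L n ω b := by
      linarith [hmin, hLta, hLtb, hDa2, hDb2]
    have hA2 : L n ω a ≤ 2 * L n ω b := by
      linarith [hchain, mul_le_mul_of_nonneg_right hε10 hA.le,
        mul_le_mul_of_nonneg_right hε10 hB.le]
    -- conclude ratio bound
    have hratio : L n ω a / L n ω b ≤ 1 + 10 * ε := by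
      rw [div_le_iff₀ hB]
      linarith [hchain, mul_le_mul_of_nonneg_left hA2 hεpos.le, mul_pos hεpos hB]
    have habs : |L n ω a / L n ω b - 1| = L n ω a / L n ω b - 1 := by
      rw [abs_of_nonneg]
      have : (1:ℝ) ≤ L n ω a / L n ω b := (le_div_iff₀ hB).mpr (by linarith)
      linarith
    rw [habs] at hω
    linarith
  have hupper : ∀ n, μ {ω | δ < |L n ω (what n ω) / L n ω (wstar n ω) - 1|} ≤
      μ {ω | ∃ w ∈ Q, ε < |Lt n ω w / L n ω w - 1|} +
      μ {ω | ∃ w ∈ Q, ε < |D n ω w| / Rn n w} +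
      μ {ω | ∃ w ∈ Q, ε < |L n ω w / Rn n w - 1|} := fun n =>
    (measure_mono (key n)).trans ((measure_union_le _ _).trans
      (add_le_add_left (measure_union_le _ _) _))
  have hsum : Tendsto (fun n =>
      μ {ω | ∃ w ∈ Q, ε < |Lt n ω w / L n ω w - 1|} +
      μ {ω | ∃ w ∈ Q, ε < |D n ω w| / Rn n w} +
      μ {ω | ∃ w ∈ Q, ε < |L n ω w / Rn n w - 1|}) atTop (𝓝 0) := by
    have := ((h1 ε hεpos).add (h2 ε hεpos)).add (h3 ε hεpos)
    simpa using this
  exact tendsto_of_tendsto_of_tendsto_of_le_of_le tendsto_const_nhds hsum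
    (fun n => zero_le) hupper
end

section
/- Let H₀ be an n₀×n₀ projection matrix of rank p and H̃₀ = G(H₀ - I) + I with G = diag((1-h_i)^{-1}) where h_i are the diagonal entries of H₀, assumed to satisfy max_i h_i ≤ Cp/n₀ < 1. Then λ_max(H̃₀) ≤ 1 + Cp/(n₀ - Cp), and for any μ ∈ ℝ^{n₀}, ‖(H̃₀ - H₀)μ‖² ≤ (Cp/(n₀-Cp))² ‖μ‖². -/
open Matrix

private lemma euclid_norm_sq (n : ℕ) (v : Fin n → ℝ) :
    ‖((WithLp.equiv 2 (Fin n → ℝ)).symm v)‖ ^ 2 = ∑ i, (v i)^2 := by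
  rw [EuclideanSpace.norm_eq, Real.sq_sqrt (by positivity)]
  simp [sq_abs]

private lemma clm_apply_eq (n : ℕ) (A : Matrix (Fin n) (Fin n) ℝ) (v : Fin n → ℝ) :
    Matrix.toEuclideanCLM (𝕜 := ℝ) A ((WithLp.equiv 2 _).symm v) =
      (WithLp.equiv 2 _).symm (A.mulVec v) := by
  simp [Matrix.toLin'_apply]

private lemma diag_norm_le (n : ℕ) (d : Fin n → ℝ) (M : ℝ) (hM : 0 ≤ M)
    (hd : ∀ i, |d i| ≤ M) :
    ‖Matrix.toEuclideanCLM (𝕜 := ℝ) (Matrix.diagonal d)‖ ≤ M := by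
  apply ContinuousLinearMap.opNorm_le_bound _ hM
  intro x
  set v : Fin n → ℝ := WithLp.equiv 2 _ x with hv
  have hx : x = (WithLp.equiv 2 (Fin n → ℝ)).symm v := rfl
  rw [hx, clm_apply_eq]
  rw [← Real.sqrt_sq (norm_nonneg _), ← Real.sqrt_sq (by positivity : (0:ℝ) ≤ M * ‖(WithLp.equiv 2 (Fin n → ℝ)).symm v‖)]
  apply Real.sqrt_le_sqrt
  rw [mul_pow, euclid_norm_sq, euclid_norm_sq, Finset.mul_sum]
  apply Finset.sum_le_sum
  intro i _
  rw [Matrix.mulVec_diagonal]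
  have h1 : (d i)^2 ≤ M^2 := by
    have := hd i
    nlinarith [abs_nonneg (d i), sq_abs (d i)]
  nlinarith [sq_nonneg (v i)]

private lemma proj_norm_le (n : ℕ) (P : Matrix (Fin n) (Fin n) ℝ)
    (hsym : P.IsSymm) (hidem : P * P = P) :
    ‖Matrix.toEuclideanCLM (𝕜 := ℝ) P‖ ≤ 1 := by
  set T := Matrix.toEuclideanCLM (𝕜 := ℝ) P with hT
  have hPstar : star P = P := by
    rw [Matrix.star_eq_conjTranspose, Matrix.conjTranspose_eq_transpose_of_trivial]; exact hsym
  have hstar : star T = T := by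
    rw [hT, ← map_star]; exact congrArg _ hPstar
  have hadj : ContinuousLinearMap.adjoint T = T := by
    rw [← ContinuousLinearMap.star_eq_adjoint]; exact hstar
  have hTT : T ∘L T = T := by
    rw [hT, ← ContinuousLinearMap.mul_def, ← _root_.map_mul, hidem]
  apply ContinuousLinearMap.opNorm_le_bound _ zero_le_one
  intro x
  rw [one_mul]
  have key : ‖T x‖^2 ≤ ‖T x‖ * ‖x‖ := by
    have h1 : (inner ℝ (T x) (T x) : ℝ) = inner ℝ (T x) x := by
      calc (inner ℝ (T x) (T x) : ℝ)
          = inner ℝ x (ContinuousLinearMap.adjoint T (T x)) :=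
            (ContinuousLinearMap.adjoint_inner_right T _ _).symm
        _ = inner ℝ x (T (T x)) := by rw [hadj]
        _ = inner ℝ x (T x) := by rw [← ContinuousLinearMap.comp_apply, hTT]
          _ = inner ℝ (T x) x := real_inner_comm _ _
    calc ‖T x‖^2 = inner ℝ (T x) (T x) := (real_inner_self_eq_norm_sq _).symm
      _ = inner ℝ (T x) x := h1
      _ ≤ ‖T x‖ * ‖x‖ := real_inner_le_norm _ _
  rcases eq_or_lt_of_le (norm_nonneg (T x)) with h | h
  · rw [← h]; exact norm_nonneg x
  · nlinarith

/-- If `H₀` is an `n₀×n₀` projection matrix of rank `p` with diagonal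
entries `h_i ≤ Cp/n₀ < 1`, and `H̃₀ = G(H₀ - I) + I` with `G = diag((1-h_i)⁻¹)`,
then `λ_max(H̃₀) ≤ 1 + Cp/(n₀ - Cp)` (operator norm) and for every `v`,
`‖(H̃₀ - H₀)v‖² ≤ (Cp/(n₀-Cp))² ‖v‖²`. -/
theorem stmt14 (n₀ p : ℕ) (C : ℝ) (H : Matrix (Fin n₀) (Fin n₀) ℝ)
    (hsym : H.IsSymm) (hidem : H * H = H) (hrank : H.rank = p)
    (hC : 0 < C) (hCp : C * p < n₀) (hdiag : ∀ i, H i i ≤ C * p / n₀) :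
    let G : Matrix (Fin n₀) (Fin n₀) ℝ := Matrix.diagonal fun i => (1 - H i i)⁻¹
    let Htil : Matrix (Fin n₀) (Fin n₀) ℝ := G * (H - 1) + 1
    ‖Matrix.toEuclideanCLM (𝕜 := ℝ) Htil‖ ≤ 1 + C * p / ((n₀ : ℝ) - C * p) ∧
      ∀ v : Fin n₀ → ℝ,
        ∑ i, ((Htil - H).mulVec v i) ^ 2 ≤
          (C * p / ((n₀ : ℝ) - C * p)) ^ 2 * ∑ i, (v i) ^ 2 := by
  intro G Htil
  set e := Matrix.toEuclideanCLM (𝕜 := ℝ) (n := Fin n₀)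
  set t : ℝ := C * p / ((n₀ : ℝ) - C * p) with ht
  have hCp0 : (0:ℝ) ≤ C * p := by positivity
  have hn : (0:ℝ) < (n₀ : ℝ) := lt_of_le_of_lt hCp0 hCp
  have hden : (0:ℝ) < (n₀ : ℝ) - C * p := by linarith
  have ht0 : 0 ≤ t := by positivity
  -- diagonal entries nonneg and < 1
  have hge0 : ∀ i, 0 ≤ H i i := by
    intro i
    have : H i i = ∑ j, (H i j)^2 := by
      conv_lhs => rw [← hidem]
      rw [Matrix.mul_apply]
      refine Finset.sum_congr rfl fun j _ => ?_
      have := hsym.apply i j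
      rw [sq]; rw [show H j i = H i j from this]
    rw [this]; positivity
  have hlt1 : ∀ i, H i i < 1 := fun i =>
    lt_of_le_of_lt (hdiag i) (by rw [div_lt_one hn]; exact hCp)
  -- G - 1 as a diagonal matrix with entries bounded by t
  have hG1 : G - 1 = Matrix.diagonal (fun i => (1 - H i i)⁻¹ - 1) := by
    rw [show (1 : Matrix (Fin n₀) (Fin n₀) ℝ) = Matrix.diagonal (fun _ => (1:ℝ)) by
      simp [Matrix.diagonal_one], Matrix.diagonal_sub]
  have hentry : ∀ i, |(1 - H i i)⁻¹ - 1| ≤ t := by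
    intro i
    have h1 : 0 < 1 - H i i := by linarith [hlt1 i]
    have heq : (1 - H i i)⁻¹ - 1 = H i i / (1 - H i i) := by
      field_simp
      ring
    rw [heq, abs_of_nonneg (div_nonneg (hge0 i) h1.le)]
    rw [ht, div_le_div_iff₀ h1 hden]
    have hHn : H i i * n₀ ≤ C * p := (le_div_iff₀ hn).mp (hdiag i)
    nlinarith [hge0 i, hCp0]
  have hGnorm : ‖e (G - 1)‖ ≤ t := by
    rw [hG1]; exact diag_norm_le n₀ _ t ht0 hentry
  -- 1 - H is a symmetric idempotent
  have hsym' : (1 - H).IsSymm := by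
    rw [Matrix.IsSymm, Matrix.transpose_sub, Matrix.transpose_one, hsym]
  have hidem' : (1 - H) * (1 - H) = 1 - H := by
    rw [sub_mul, mul_sub, mul_sub, hidem]; noncomm_ring
  have hH1norm : ‖e (H - 1)‖ ≤ 1 := by
    have : H - 1 = -(1 - H) := (neg_sub 1 H).symm
    rw [this, map_neg, norm_neg]
    exact proj_norm_le n₀ _ hsym' hidem'
  have hHnorm : ‖e H‖ ≤ 1 := proj_norm_le n₀ H hsym hidem
  -- key decomposition
  have hdecomp : Htil = (G - 1) * (H - 1) + H := by
    show G * (H - 1) + 1 = (G - 1) * (H - 1) + H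
    noncomm_ring
  have hprod : ‖e ((G - 1) * (H - 1))‖ ≤ t := by
    rw [_root_.map_mul]
    calc ‖e (G-1) * e (H-1)‖ ≤ ‖e (G-1)‖ * ‖e (H-1)‖ := norm_mul_le _ _
      _ ≤ t * 1 := mul_le_mul hGnorm hH1norm (norm_nonneg _) ht0
      _ = t := mul_one t
  constructor
  · calc ‖e Htil‖ = ‖e ((G - 1) * (H - 1)) + e H‖ := by rw [hdecomp, map_add]
      _ ≤ ‖e ((G - 1) * (H - 1))‖ + ‖e H‖ := norm_add_le _ _
      _ ≤ t + 1 := add_le_add hprod hHnorm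
      _ = 1 + t := add_comm t 1
  · intro v
    have hsub : Htil - H = (G - 1) * (H - 1) := by
      rw [hdecomp, add_sub_cancel_right]
    set x : EuclideanSpace ℝ (Fin n₀) := (WithLp.equiv 2 (Fin n₀ → ℝ)).symm v with hx
    have happ : e (Htil - H) x = (WithLp.equiv 2 (Fin n₀ → ℝ)).symm ((Htil - H).mulVec v) :=
      clm_apply_eq n₀ _ v
    have h1 : ∑ i, ((Htil - H).mulVec v i) ^ 2 = ‖e (Htil - H) x‖ ^ 2 := by
      rw [happ, euclid_norm_sq]
    have h2 : ‖e (Htil - H) x‖ ≤ t * ‖x‖ := by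
      calc ‖e (Htil - H) x‖ ≤ ‖e (Htil - H)‖ * ‖x‖ := ContinuousLinearMap.le_opNorm _ _
        _ ≤ t * ‖x‖ := by
            apply mul_le_mul_of_nonneg_right _ (norm_nonneg _)
            rw [hsub]; exact hprod
    have h3 : ‖x‖ ^ 2 = ∑ i, (v i)^2 := euclid_norm_sq n₀ v
    rw [h1, ← h3, ← mul_pow]
    exact pow_le_pow_left₀ (norm_nonneg _) h2 2
end

section
/- In the orthogonal-design linear model, let the risk be R₁(w) = ‖μ₀ − Σ_{m=0}^{2} w_m H_m μ_m‖² + w₀²(p₁+p₂)σ² + Σ_{m=1}^{2} (n₀/n_m) w_m² p_m σ², where under the assumption n_m^{-1} X_{S_m Δ_k}ᵀ X_{S_m Δ_l} = δ_{kl} I the bias term simplifies to n₀[(1-w₀-w₁)²s₁ + (1-w₀-w₂)²s₂ + w₃-free terms]. With s₁, s₂ > 0, n₁ = n₂, n₀ = o(n₁), the minimizer over [0,1]³ satisfies (w₀, w₁, w₂) → (0, 1, 1) and the minimal risk is o(n₀), while the complete-case risk is (p₁+p₂)σ². -/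
open Filter Topology

/-- Auxiliary: if `f² → 0` then `f → 0`. -/
lemma tendsto_of_sq_tendsto_zero {f : ℕ → ℝ}
    (h : Tendsto (fun k => (f k) ^ 2) atTop (𝓝 0)) :
    Tendsto f atTop (𝓝 0) := by
  have h1 : Tendsto (fun k => |f k|) atTop (𝓝 0) := by
    have h2 := (Real.continuous_sqrt.tendsto 0).comp h
    simpa [Function.comp_def, Real.sqrt_sq_eq_abs] using h2
  rw [tendsto_zero_iff_norm_tendsto_zero]
  simpa [Real.norm_eq_abs] using h1

/-- Auxiliary cancellation lemma. -/
lemma key_bound (a nb x c s : ℝ) (ha : 1 ≤ a) (hnb : 0 < nb) (hs : 0 < s)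
    (hx : 0 ≤ x) (h : a * (x * s) ≤ a / nb * c) : x ≤ c / s / nb := by
  have ha0 : 0 < a := lt_of_lt_of_le one_pos ha
  have h2 : a * (x * s) * nb ≤ a / nb * c * nb :=
    mul_le_mul_of_nonneg_right h hnb.le
  have h3 : a / nb * c * nb = a * c := by field_simp
  have h4 : a * (x * s * nb) ≤ a * c := by nlinarith
  have h5 : x * s * nb ≤ c := le_of_mul_le_mul_left h4 ha0
  rw [div_div, le_div_iff₀ (by positivity : 0 < s * nb)]
  nlinarith

/-- Orthogonal-design linear model risk
`R_k(w) = n₀ₖ[(1-w₀-w₁)²s₁ + (1-w₀-w₂)²s₂] + w₀²(p₁+p₂)σ² + (n₀ₖ/n₁ₖ)(w₁²p₁ + w₂²p₂)σ²`.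
With `s₁, s₂ > 0`, `n₁ → ∞`, `n₀ = o(n₁)`, any sequence of minimizers over `[0,1]³`
converges to `(0,1,1)` and the minimal risk is `o(n₀)`, while the complete-case risk
(at `w = (1,0,0)`) equals `(p₁+p₂)σ²`. -/
theorem stmt16 (n₀ n₁ : ℕ → ℝ) (s₁ s₂ σ2 p₁ p₂ : ℝ)
    (hs₁ : 0 < s₁) (hs₂ : 0 < s₂) (hσ2 : 0 < σ2) (hp₁ : 0 < p₁) (hp₂ : 0 < p₂)
    (hn₀ : ∀ k, 1 ≤ n₀ k) (hn₁ : ∀ k, 0 < n₁ k)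
    (hn₁top : Tendsto n₁ atTop atTop)
    (hsmall : Tendsto (fun k => n₀ k / n₁ k) atTop (𝓝 0))
    (R : ℕ → ℝ × ℝ × ℝ → ℝ)
    (hR : ∀ k w, R k w =
      n₀ k * ((1 - w.1 - w.2.1) ^ 2 * s₁ + (1 - w.1 - w.2.2) ^ 2 * s₂)
        + w.1 ^ 2 * (p₁ + p₂) * σ2
        + (n₀ k / n₁ k) * (w.2.1 ^ 2 * p₁ + w.2.2 ^ 2 * p₂) * σ2)
    (Q : Set (ℝ × ℝ × ℝ))
    (hQ : Q = {u | u.1 ∈ Set.Icc (0:ℝ) 1 ∧ u.2.1 ∈ Set.Icc (0:ℝ) 1 ∧ u.2.2 ∈ Set.Icc (0:ℝ) 1})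
    (w : ℕ → ℝ × ℝ × ℝ) (hwQ : ∀ k, w k ∈ Q)
    (hwmin : ∀ k, ∀ u ∈ Q, R k (w k) ≤ R k u) :
    Tendsto w atTop (𝓝 (0, 1, 1)) ∧
      Tendsto (fun k => R k (w k) / n₀ k) atTop (𝓝 0) ∧
      ∀ k, R k (1, 0, 0) = (p₁ + p₂) * σ2 := by
  set C : ℝ := (p₁ + p₂) * σ2 with hCdef
  have hC : 0 < C := by positivity
  have hn₀pos : ∀ k, 0 < n₀ k := fun k => lt_of_lt_of_le one_pos (hn₀ k)
  -- the point (0,1,1) is admissible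
  have h011 : ((0 : ℝ), (1 : ℝ), (1 : ℝ)) ∈ Q := by
    rw [hQ]; norm_num
  -- risk at (0,1,1)
  have hR011 : ∀ k, R k (0, 1, 1) = n₀ k / n₁ k * C := by
    intro k; rw [hR]; simp only [hCdef]; ring
  -- key bound on the minimal risk
  have hbound : ∀ k, R k (w k) ≤ n₀ k / n₁ k * C := by
    intro k
    have := hwmin k (0, 1, 1) h011
    rwa [hR011 k] at this
  -- nonnegativity of all terms
  have hterms : ∀ k,
      0 ≤ n₀ k * ((1 - (w k).1 - (w k).2.1) ^ 2 * s₁) ∧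
      0 ≤ n₀ k * ((1 - (w k).1 - (w k).2.2) ^ 2 * s₂) ∧
      0 ≤ (w k).1 ^ 2 * C ∧
      0 ≤ (n₀ k / n₁ k) * ((w k).2.1 ^ 2 * p₁ + (w k).2.2 ^ 2 * p₂) * σ2 := by
    intro k
    have h0 := (hn₀pos k).le
    have h1 := (hn₁ k).le
    refine ⟨by positivity, by positivity, by positivity, ?_⟩
    have : 0 ≤ n₀ k / n₁ k := div_nonneg h0 h1
    positivity
  -- expand the bound
  have hexp : ∀ k,
      n₀ k * ((1 - (w k).1 - (w k).2.1) ^ 2 * s₁)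
      + n₀ k * ((1 - (w k).1 - (w k).2.2) ^ 2 * s₂)
      + (w k).1 ^ 2 * C
      + (n₀ k / n₁ k) * ((w k).2.1 ^ 2 * p₁ + (w k).2.2 ^ 2 * p₂) * σ2
      ≤ n₀ k / n₁ k * C := by
    intro k
    have hb := hbound k
    rw [hR] at hb
    calc n₀ k * ((1 - (w k).1 - (w k).2.1) ^ 2 * s₁)
        + n₀ k * ((1 - (w k).1 - (w k).2.2) ^ 2 * s₂)
        + (w k).1 ^ 2 * C
        + (n₀ k / n₁ k) * ((w k).2.1 ^ 2 * p₁ + (w k).2.2 ^ 2 * p₂) * σ2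
        = n₀ k * ((1 - (w k).1 - (w k).2.1) ^ 2 * s₁ + (1 - (w k).1 - (w k).2.2) ^ 2 * s₂)
          + (w k).1 ^ 2 * (p₁ + p₂) * σ2
          + (n₀ k / n₁ k) * ((w k).2.1 ^ 2 * p₁ + (w k).2.2 ^ 2 * p₂) * σ2 := by
          simp only [hCdef]; ring
      _ ≤ n₀ k / n₁ k * C := hb
  -- term-wise consequences
  have ht1 : ∀ k, (1 - (w k).1 - (w k).2.1) ^ 2 ≤ C / s₁ / n₁ k := by
    intro k
    have h := hexp k
    obtain ⟨q1, q2, q3, q4⟩ := hterms k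
    refine key_bound (n₀ k) (n₁ k) _ C s₁ (hn₀ k) (hn₁ k) hs₁ (sq_nonneg _) ?_
    linarith
  have ht2 : ∀ k, (1 - (w k).1 - (w k).2.2) ^ 2 ≤ C / s₂ / n₁ k := by
    intro k
    have h := hexp k
    obtain ⟨q1, q2, q3, q4⟩ := hterms k
    refine key_bound (n₀ k) (n₁ k) _ C s₂ (hn₀ k) (hn₁ k) hs₂ (sq_nonneg _) ?_
    linarith
  have ht0 : ∀ k, (w k).1 ^ 2 ≤ n₀ k / n₁ k := by
    intro k
    have h := hexp k
    obtain ⟨q1, q2, q3, q4⟩ := hterms k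
    have h2 : (w k).1 ^ 2 * C ≤ n₀ k / n₁ k * C := by linarith
    exact le_of_mul_le_mul_right h2 hC
  -- limits of the bounding sequences
  have hlim1 : Tendsto (fun k => C / s₁ / n₁ k) atTop (𝓝 0) :=
    Tendsto.div_atTop tendsto_const_nhds hn₁top
  have hlim2 : Tendsto (fun k => C / s₂ / n₁ k) atTop (𝓝 0) :=
    Tendsto.div_atTop tendsto_const_nhds hn₁top
  -- squared quantities tend to 0
  have hsq1 : Tendsto (fun k => (1 - (w k).1 - (w k).2.1) ^ 2) atTop (𝓝 0) :=
    squeeze_zero (fun k => sq_nonneg _) ht1 hlim1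
  have hsq2 : Tendsto (fun k => (1 - (w k).1 - (w k).2.2) ^ 2) atTop (𝓝 0) :=
    squeeze_zero (fun k => sq_nonneg _) ht2 hlim2
  have hsq0 : Tendsto (fun k => (w k).1 ^ 2) atTop (𝓝 0) :=
    squeeze_zero (fun k => sq_nonneg _) ht0 hsmall
  have hg1 : Tendsto (fun k => 1 - (w k).1 - (w k).2.1) atTop (𝓝 0) :=
    tendsto_of_sq_tendsto_zero hsq1
  have hg2 : Tendsto (fun k => 1 - (w k).1 - (w k).2.2) atTop (𝓝 0) :=
    tendsto_of_sq_tendsto_zero hsq2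
  have hw0 : Tendsto (fun k => (w k).1) atTop (𝓝 0) :=
    tendsto_of_sq_tendsto_zero hsq0
  have hw1 : Tendsto (fun k => (w k).2.1) atTop (𝓝 1) := by
    have h := (tendsto_const_nhds (x := (1:ℝ)) (f := atTop)).sub hw0 |>.sub hg1
    have heq : (fun k => 1 - (w k).1 - (1 - (w k).1 - (w k).2.1)) = fun k => (w k).2.1 := by
      funext k; ring
    rw [heq] at h
    simpa using h
  have hw2 : Tendsto (fun k => (w k).2.2) atTop (𝓝 1) := by
    have h := (tendsto_const_nhds (x := (1:ℝ)) (f := atTop)).sub hw0 |>.sub hg2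
    have heq : (fun k => 1 - (w k).1 - (1 - (w k).1 - (w k).2.2)) = fun k => (w k).2.2 := by
      funext k; ring
    rw [heq] at h
    simpa using h
  refine ⟨?_, ?_, ?_⟩
  · exact hw0.prodMk_nhds (hw1.prodMk_nhds hw2)
  · -- minimal risk is o(n₀)
    have hub : ∀ k, R k (w k) / n₀ k ≤ C / n₁ k := by
      intro k
      have hb := hbound k
      have heq : (n₀ k / n₁ k * C) / n₀ k = C / n₁ k := by
        have h0 : n₀ k ≠ 0 := (hn₀pos k).ne'
        have h1 : n₁ k ≠ 0 := (hn₁ k).ne'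
        field_simp
      calc R k (w k) / n₀ k ≤ (n₀ k / n₁ k * C) / n₀ k := by
            gcongr
            exact (hn₀pos k).le
        _ = C / n₁ k := heq
    have hlb : ∀ k, 0 ≤ R k (w k) / n₀ k := by
      intro k
      obtain ⟨q1, q2, q3, q4⟩ := hterms k
      have hRnn : 0 ≤ R k (w k) := by
        rw [hR]
        simp only [hCdef] at q3
        nlinarith
      exact div_nonneg hRnn (hn₀pos k).le
    exact squeeze_zero hlb hub (Tendsto.div_atTop tendsto_const_nhds hn₁top)
  · intro k
    rw [hR]
    simp only [hCdef]
    ring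
end
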